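/- arXiv:2402.15457 — 5 statements merged into one kernel-verified Lean document; each statement's English description precedes it below -/
import Mathlib

section
/- For every z ∈ ℝ, (1 + z/√α)^α · e^(-√α·z) converges to e^(-z²/2) as α → ∞. -/
open Filter

private lemma sqrt_tendsto_atTop : Tendsto Real.sqrt atTop atTop := by
  apply tendsto_atTop_atTop.2
  intro b
  exact ⟨b ^ 2, fun a ha => by
    calc b ≤ |b| := le_abs_self b
    _ = Real.sqrt (b ^ 2) := (Real.sqrt_sq_eq_abs b).symm
    _ ≤ Real.sqrt a := Real.sqrt_le_sqrt ha⟩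

private lemma key_lim (z : ℝ) :
    Tendsto (fun t : ℝ => (Real.log (1 + z * t) - z * t) / t ^ 2)
      (nhdsWithin 0 (Set.Ioi 0)) (nhds (-(z ^ 2) / 2)) := by
  rw [tendsto_iff_norm_sub_tendsto_zero]
  have hb : Tendsto (fun t : ℝ => |z| ^ 3 * t / (1 - |z| * t))
      (nhdsWithin 0 (Set.Ioi 0)) (nhds 0) := by
    have hc : ContinuousAt (fun t : ℝ => |z| ^ 3 * t / (1 - |z| * t)) 0 := by
      apply ContinuousAt.div
      · fun_prop
      · fun_prop
      · simp
    have := hc.tendsto.mono_left (nhdsWithin_le_nhds (s := Set.Ioi (0:ℝ)))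
    simpa using this
  apply squeeze_zero_norm' _ hb
  filter_upwards [self_mem_nhdsWithin,
    eventually_nhdsWithin_of_eventually_nhds (eventually_abs_sub_lt 0 (show (0:ℝ) < (1 + |z|)⁻¹ by positivity))]
    with t ht hlt
  have ht0 : 0 < t := ht
  have hzt : |z| * t < 1 := by
    have h1 : |t - 0| < (1 + |z|)⁻¹ := hlt
    rw [sub_zero, abs_of_pos ht0] at h1
    calc |z| * t ≤ (1 + |z|) * t := by nlinarith [abs_nonneg z]
    _ < (1 + |z|) * (1 + |z|)⁻¹ := by
        apply mul_lt_mul_of_pos_left h1; positivity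
    _ = 1 := by rw [mul_inv_cancel₀]; positivity
  have hest := Real.abs_log_sub_add_sum_range_le (x := -(z * t)) (by
    rw [abs_neg, abs_mul, abs_of_pos ht0]; exact hzt) 2
  simp only [Finset.sum_range_succ, Finset.sum_range_zero] at hest
  have h1mx : Real.log (1 - -(z * t)) = Real.log (1 + z * t) := by ring_nf
  rw [h1mx] at hest
  have habs : |-(z*t)| = |z| * t := by rw [abs_neg, abs_mul, abs_of_pos ht0]
  rw [habs] at hest
  have ht2 : (0:ℝ) < t ^ 2 := by positivity
  have key : |(Real.log (1 + z * t) - z * t) / t ^ 2 - -(z ^ 2) / 2|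
      ≤ (|z| * t) ^ 3 / (1 - |z| * t) / t ^ 2 := by
    have heq : (Real.log (1 + z * t) - z * t) / t ^ 2 - -(z ^ 2) / 2
        = (0 + (-(z*t)) ^ (0+1) / (0+1) + (-(z*t)) ^ (1+1) / (1+1) + Real.log (1 + z*t)) / t ^ 2 := by
      field_simp
      ring
    rw [heq, abs_div, abs_of_pos ht2]
    gcongr
    refine le_trans (le_of_eq ?_) (hest.trans (le_of_eq ?_))
    all_goals norm_num
  rw [Real.norm_eq_abs, Real.norm_eq_abs, abs_abs]
  refine key.trans (le_of_eq ?_)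
  rw [div_div]
  rw [mul_pow]
  rw [mul_comm (1 - |z| * t) (t^2)]
  rw [← div_div]
  congr 1
  field_simp

/-- Second order asymptotics I: `(1 + z/√α)^α e^{-√α z} → e^{-z²/2}` as `α → ∞`. -/
theorem second_order_asymptotics_I (z : ℝ) :
    Tendsto (fun α : ℝ => (1 + z / Real.sqrt α) ^ α * Real.exp (-(Real.sqrt α * z)))
      atTop (nhds (Real.exp (-(z ^ 2) / 2))) := by
  have hT : Tendsto (fun α : ℝ => (Real.sqrt α)⁻¹) atTop (nhdsWithin 0 (Set.Ioi 0)) :=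
    tendsto_inv_atTop_nhdsGT_zero.comp sqrt_tendsto_atTop
  have hmain := ((Real.continuous_exp.continuousAt.tendsto).comp ((key_lim z).comp hT))
  apply hmain.congr'
  filter_upwards [eventually_gt_atTop (0 : ℝ), sqrt_tendsto_atTop.eventually_gt_atTop (2 * |z|)]
    with α hα hs
  have hs0 : 0 < Real.sqrt α := Real.sqrt_pos.2 hα
  have hα2 : Real.sqrt α ^ 2 = α := Real.sq_sqrt hα.le
  set s := Real.sqrt α with hsdef
  clear_value s
  have hzs : |z / s| < 1 := by
    rw [abs_div, abs_of_pos hs0, div_lt_one hs0]; nlinarith [abs_nonneg z]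
  have hpos : 0 < 1 + z / s := by
    have := neg_lt_of_abs_lt hzs
    linarith
  simp only [Function.comp_apply]
  rw [Real.rpow_def_of_pos hpos, ← Real.exp_add]
  congr 1
  rw [← hα2, div_eq_mul_inv]
  have hs0' : s ≠ 0 := ne_of_gt hs0
  simp only [Real.sqrt_sq hs0.le]
  field_simp
  ring
end

section
/- Let (u_α)_{α>0} be a family of complex numbers and u, c ∈ ℂ such that √α·(u_α - u) → c as α → ∞. Then (1 + u_α/√α)^α · e^(-√α·u) converges to e^(-u²/2 + c) as α → ∞. -/
open Filter

noncomputable def gAux (z : ℂ) : ℂ := (Complex.log (1 + z) - z + z ^ 2 / 2) / z ^ 2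

lemma logTaylor_three (z : ℂ) : Complex.logTaylor 3 z = z - z ^ 2 / 2 := by
  simp [Complex.logTaylor_succ, Complex.logTaylor_zero]
  ring

lemma hAux_bound {z : ℂ} (hz : ‖z‖ < 1) :
    ‖Complex.log (1 + z) - z + z ^ 2 / 2‖ ≤ ‖z‖ ^ 3 * (1 - ‖z‖)⁻¹ / 3 := by
  have := Complex.norm_log_sub_logTaylor_le 2 hz
  rw [logTaylor_three] at this
  convert this using 2 <;> [ring; skip] <;> norm_num

lemma gAux_tendsto : Tendsto gAux (nhds 0) (nhds 0) := by
  have hb : ∀ᶠ z : ℂ in nhds 0, ‖gAux z‖ ≤ ‖z‖ := by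
    filter_upwards [Metric.ball_mem_nhds (0 : ℂ) one_half_pos] with z hz
    rw [Metric.mem_ball, dist_zero_right] at hz
    rcases eq_or_ne z 0 with rfl | hz0
    · simp [gAux]
    · have hz1 : ‖z‖ < 1 := hz.trans (by norm_num)
      have h2 : (1 - ‖z‖)⁻¹ ≤ 2 := by
        rw [inv_le_comm₀ (by linarith) (by norm_num)]
        linarith
      have : ‖gAux z‖ ≤ (‖z‖ ^ 3 * (1 - ‖z‖)⁻¹ / 3) / ‖z‖ ^ 2 := by
        rw [gAux, norm_div, norm_pow]
        gcongr
        exact hAux_bound hz1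
      refine this.trans ?_
      have hzpos : 0 < ‖z‖ := norm_pos_iff.mpr hz0
      rw [div_le_iff₀ (by positivity)]
      nlinarith [norm_nonneg z, pow_nonneg (norm_nonneg z) 3, h2]
  have : Tendsto (fun z : ℂ => ‖z‖) (nhds 0) (nhds 0) := by
    simpa using (continuous_norm.tendsto (0 : ℂ))
  exact squeeze_zero_norm' hb this

/-- Second order asymptotics II: if `√α (u_α - u) → c` then
`(1 + u_α/√α)^α e^{-√α u} → e^{-u²/2 + c}` as `α → ∞`. -/
theorem second_order_asymptotics_II (u : ℝ → ℂ) (u₀ c : ℂ)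
    (h : Tendsto (fun α : ℝ => (Real.sqrt α : ℂ) * (u α - u₀)) atTop (nhds c)) :
    Tendsto (fun α : ℝ =>
        (1 + u α / (Real.sqrt α : ℂ)) ^ (α : ℂ) * Complex.exp (-((Real.sqrt α : ℂ) * u₀)))
      atTop (nhds (Complex.exp (-(u₀ ^ 2) / 2 + c))) := by
  -- √α → ∞
  have hs : Tendsto Real.sqrt atTop atTop := by
    refine tendsto_atTop_atTop.2 fun b => ⟨(max b 0) ^ 2, fun a ha => ?_⟩
    calc b ≤ max b 0 := le_max_left _ _
      _ = Real.sqrt ((max b 0) ^ 2) := (Real.sqrt_sq (le_max_right _ _)).symm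
      _ ≤ Real.sqrt a := Real.sqrt_le_sqrt ha
  -- (√α : ℂ)⁻¹ → 0
  have hinv : Tendsto (fun α : ℝ => ((Real.sqrt α : ℂ))⁻¹) atTop (nhds 0) := by
    have : Tendsto (fun α : ℝ => ((Real.sqrt α)⁻¹ : ℝ)) atTop (nhds 0) :=
      tendsto_inv_atTop_zero.comp hs
    have h2 := (Complex.continuous_ofReal.tendsto 0).comp this
    rw [Complex.ofReal_zero] at h2
    exact h2.congr fun α => by simp [Function.comp]
  -- u α → u₀
  have hu : Tendsto u atTop (nhds u₀) := by
    have key : Tendsto (fun α : ℝ => u₀ + ((Real.sqrt α : ℂ) * (u α - u₀)) * ((Real.sqrt α : ℂ))⁻¹)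
        atTop (nhds (u₀ + c * 0)) := tendsto_const_nhds.add (h.mul hinv)
    rw [mul_zero, add_zero] at key
    refine key.congr' ?_
    filter_upwards [eventually_gt_atTop (0 : ℝ)] with α hα
    have hsne : ((Real.sqrt α : ℂ)) ≠ 0 := by
      simpa using (Real.sqrt_pos.mpr hα).ne'
    field_simp
    ring
  -- z α := u α / √α → 0
  set z : ℝ → ℂ := fun α => u α / (Real.sqrt α : ℂ) with hz_def
  have hz : Tendsto z atTop (nhds 0) := by
    have := hu.mul hinv
    rw [mul_zero] at this
    exact this.congr fun α => (div_eq_mul_inv _ _).symm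
  -- the exponent
  set E : ℝ → ℂ := fun α => Complex.log (1 + z α) * (α : ℂ) - (Real.sqrt α : ℂ) * u₀ with hE_def
  have hE : Tendsto E atTop (nhds (-(u₀ ^ 2) / 2 + c)) := by
    have hcomb : Tendsto (fun α : ℝ =>
        (u α) ^ 2 * gAux (z α) + (Real.sqrt α : ℂ) * (u α - u₀) - (u α) ^ 2 / 2)
        atTop (nhds (u₀ ^ 2 * 0 + c - u₀ ^ 2 / 2)) :=
      (((hu.pow 2).mul (gAux_tendsto.comp hz)).add h).sub ((hu.pow 2).div_const 2)
    rw [show u₀ ^ 2 * 0 + c - u₀ ^ 2 / 2 = -(u₀ ^ 2) / 2 + c by ring] at hcomb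
    refine hcomb.congr' ?_
    filter_upwards [eventually_gt_atTop (0 : ℝ)] with α hα
    have hsne : ((Real.sqrt α : ℂ)) ≠ 0 := by
      simpa using (Real.sqrt_pos.mpr hα).ne'
    have hsq : ((Real.sqrt α : ℂ)) ^ 2 = (α : ℂ) := by
      rw [← Complex.ofReal_pow, Real.sq_sqrt hα.le]
    have huz : u α = z α * (Real.sqrt α : ℂ) := by
      rw [hz_def]; field_simp
    have hkey : (u α) ^ 2 * gAux (z α)
        = (α : ℂ) * (Complex.log (1 + z α) - z α + (z α) ^ 2 / 2) := by
      rcases eq_or_ne (z α) 0 with h0 | h0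
      · rw [huz, h0]; simp [gAux]
      · rw [huz, mul_pow, hsq, gAux, mul_comm ((z α) ^ 2) ((α : ℂ)), mul_assoc,
          mul_div_cancel₀ _ (pow_ne_zero 2 h0)]
    have : (α : ℂ) * z α = (Real.sqrt α : ℂ) * u α := by
      rw [hz_def]
      field_simp
      rw [← hsq]; ring
    have h2 : (α : ℂ) * ((z α) ^ 2 / 2) = (u α) ^ 2 / 2 := by
      rw [huz, mul_pow, hsq]; ring
    linear_combination hkey - this + h2
  -- conclude
  have := (Complex.continuous_exp.tendsto _).comp hE
  refine this.congr' ?_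
  filter_upwards [eventually_gt_atTop (0 : ℝ),
    hz (Metric.ball_mem_nhds (0 : ℂ) one_half_pos)] with α hα hzα
  simp only [Function.comp, hE_def]
  simp only [Set.mem_preimage, Metric.mem_ball, dist_zero_right] at hzα
  have hne : (1 + z α) ≠ 0 := by
    intro hcon
    have : ‖z α‖ = 1 := by
      have : z α = -1 := by linear_combination hcon
      simp [this]
    linarith
  rw [Complex.cpow_def_of_ne_zero hne, ← Complex.exp_add]
  ring_nf
end

section
/- For α > 0 let Z_α := (Γ(α,1) - α)/√α be the standardized Gamma random variable with shape α and rate 1. Then Z_α converges in total variation distance to a standard Gaussian distribution as α → ∞. -/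
open MeasureTheory ProbabilityTheory Filter

/-- The total variation distance between two measures, as the supremum over measurable
sets of the absolute difference of the measures. -/
noncomputable def tvDist {Ω : Type*} [MeasurableSpace Ω] (μ ν : Measure Ω) : ℝ :=
  ⨆ s : {s : Set Ω // MeasurableSet s}, |(μ s.1).toReal - (ν s.1).toReal|

open Real Set
open scoped ENNReal NNReal

namespace GammaTV

lemma deriv_aux (c : ℝ) (x : ℝ) (hx : 1 + x ≠ 0) :
    HasDerivAt (fun u : ℝ => u - c * u^2 - Real.log (1+u)) (1 - c * (2*x) - (1+x)⁻¹) x := by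
  have h1 : HasDerivAt (fun u : ℝ => Real.log (1+u)) ((1+x)⁻¹) x := by
    have := (Real.hasDerivAt_log hx).comp x ((hasDerivAt_id x).const_add 1)
    simpa [Function.comp_def] using this
  have h2 : HasDerivAt (fun u : ℝ => u - c * u^2) (1 - c * (2*x)) x := by
    have := ((hasDerivAt_pow 2 x).const_mul c)
    have := (hasDerivAt_id x).fun_sub this
    simpa [pow_one, mul_comm] using this
  simpa using h2.fun_sub h1

lemma log_ineq_neg {u : ℝ} (h1 : -1 < u) (h2 : u ≤ 0) : Real.log (1+u) ≤ u - u^2/2 := by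
  set F : ℝ → ℝ := fun u => u - (1/2 : ℝ) * u^2 - Real.log (1+u) with hF
  have key : AntitoneOn F (Icc u 0) := by
    apply antitoneOn_of_deriv_nonpos (convex_Icc _ _)
    · apply ContinuousOn.sub (by fun_prop)
      apply ContinuousOn.log (by fun_prop)
      intro x hx
      simp only [mem_Icc] at hx
      nlinarith [hx.1]
    · intro x hx
      rw [interior_Icc] at hx
      exact ((deriv_aux (1/2) x (by nlinarith [hx.1.trans_le' h1.le, hx.1])).differentiableAt).differentiableWithinAt
    · intro x hx
      rw [interior_Icc, mem_Ioo] at hx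
      have hx1 : 0 < 1 + x := by nlinarith [h1.trans hx.1]
      rw [(deriv_aux (1/2) x hx1.ne').deriv]
      have : (1 : ℝ) - x ≤ (1+x)⁻¹ := by
        rw [inv_eq_one_div, le_div_iff₀ hx1]
        nlinarith [sq_nonneg x]
      nlinarith
  have h0 : F 0 = 0 := by simp [hF]
  have := key (left_mem_Icc.2 h2) (right_mem_Icc.2 h2) h2
  rw [h0] at this
  simp only [hF] at this
  linarith

lemma log_ineq_pos {u : ℝ} (h1 : 0 ≤ u) (h2 : u ≤ 1) : Real.log (1+u) ≤ u - u^2/4 := by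
  set F : ℝ → ℝ := fun u => u - (1/4 : ℝ) * u^2 - Real.log (1+u) with hF
  have key : MonotoneOn F (Icc 0 u) := by
    apply monotoneOn_of_deriv_nonneg (convex_Icc _ _)
    · apply ContinuousOn.sub (by fun_prop)
      apply ContinuousOn.log (by fun_prop)
      intro x hx
      simp only [mem_Icc] at hx
      nlinarith [hx.1]
    · intro x hx
      rw [interior_Icc] at hx
      exact ((deriv_aux (1/4) x (by nlinarith [hx.1])).differentiableAt).differentiableWithinAt
    · intro x hx
      rw [interior_Icc, mem_Ioo] at hx
      have hx1 : 0 < 1 + x := by nlinarith [hx.1]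
      rw [(deriv_aux (1/4) x hx1.ne').deriv]
      have : (1+x)⁻¹ ≤ 1 - (1/4:ℝ) * (2*x) := by
        rw [inv_eq_one_div, div_le_iff₀ hx1]
        nlinarith [hx.1, hx.2.trans_le h2]
      linarith
  have h0 : F 0 = 0 := by simp [hF]
  have := key (left_mem_Icc.2 h1) (right_mem_Icc.2 h1) h1
  rw [h0] at this
  simp only [hF] at this
  linarith

lemma log_ineq_big {u : ℝ} (h1 : 1 ≤ u) : Real.log (1+u) ≤ u * Real.log 2 := by
  set F : ℝ → ℝ := fun u => u * Real.log 2 - Real.log (1+u) with hF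
  have key : MonotoneOn F (Icc 1 u) := by
    apply monotoneOn_of_deriv_nonneg (convex_Icc _ _)
    · apply ContinuousOn.sub (by fun_prop)
      apply ContinuousOn.log (by fun_prop)
      intro x hx
      simp only [mem_Icc] at hx
      nlinarith [hx.1]
    · intro x hx
      rw [interior_Icc, mem_Ioo] at hx
      have hd : HasDerivAt F (Real.log 2 - (1+x)⁻¹) x := by
        have h1 : HasDerivAt (fun u : ℝ => Real.log (1+u)) ((1+x)⁻¹) x := by
          have := (Real.hasDerivAt_log (by nlinarith [hx.1] : (1:ℝ)+x ≠ 0)).comp x ((hasDerivAt_id x).const_add 1)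
          simpa [Function.comp_def] using this
        simpa using (hasDerivAt_id x).mul_const (Real.log 2) |>.fun_sub h1
      exact hd.differentiableAt.differentiableWithinAt
    · intro x hx
      rw [interior_Icc, mem_Ioo] at hx
      have hd : HasDerivAt F (Real.log 2 - (1+x)⁻¹) x := by
        have h1 : HasDerivAt (fun u : ℝ => Real.log (1+u)) ((1+x)⁻¹) x := by
          have := (Real.hasDerivAt_log (by nlinarith [hx.1] : (1:ℝ)+x ≠ 0)).comp x ((hasDerivAt_id x).const_add 1)
          simpa [Function.comp_def] using this
        simpa using (hasDerivAt_id x).mul_const (Real.log 2) |>.fun_sub h1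
      rw [hd.deriv]
      have h2 : (1+x)⁻¹ ≤ 1/2 := by
        rw [inv_le_comm₀ (by nlinarith [hx.1]) (by norm_num)]
        nlinarith [hx.1]
      have := Real.log_two_gt_d9
      linarith
  have h0 : F 1 = 0 := by simp [hF]; norm_num
  have := key (left_mem_Icc.2 h1) (right_mem_Icc.2 h1) h1
  rw [h0] at this
  simp only [hF] at this
  linarith


/-- shifted/scaled gamma density kernel, without normalizing constant -/
noncomputable def h (α z : ℝ) : ℝ :=
  if -Real.sqrt α < z then (1 + z / Real.sqrt α) ^ (α-1) * Real.exp (-(Real.sqrt α * z)) else 0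

/-- the normalizing constant -/
noncomputable def Cc (α : ℝ) : ℝ := Real.sqrt α * α ^ (α-1) * Real.exp (-α) / Real.Gamma α

/-- dominating function -/
noncomputable def g₀ (z : ℝ) : ℝ :=
  Real.exp 1 * Real.exp (-(z^2/4)) + Real.exp (-(z^2/8))
    + (Ioi (0:ℝ)).indicator (fun z => Real.exp (-((1-Real.log 2) * z))) z

lemma base_nonneg {α z : ℝ} (hz : -Real.sqrt α < z) : 0 < 1 + z / Real.sqrt α := by
  have hs : 0 ≤ Real.sqrt α := Real.sqrt_nonneg α
  rcases eq_or_lt_of_le hs with h0 | h0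
  · simp [← h0]
  · rw [div_eq_mul_inv]
    have : -1 < z * (Real.sqrt α)⁻¹ := by
      rw [neg_lt, ← neg_mul]
      calc -z * (Real.sqrt α)⁻¹ < Real.sqrt α * (Real.sqrt α)⁻¹ := by
            apply mul_lt_mul_of_pos_right _ (inv_pos.2 h0)
            linarith [neg_lt.2 hz]
          _ = 1 := mul_inv_cancel₀ h0.ne'
    linarith

lemma h_nonneg (α z : ℝ) : 0 ≤ h α z := by
  unfold h
  split
  ·exact mul_nonneg (Real.rpow_nonneg (base_nonneg (by assumption)).le _) (Real.exp_nonneg _)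
  · exact le_refl 0

lemma measurable_h (α : ℝ) : Measurable (h α) := by
  unfold h
  apply Measurable.ite
  · exact measurableSet_lt measurable_const measurable_id
  · exact ((measurable_const.add (measurable_id.div_const _)).pow_const _).mul
      ((measurable_id.const_mul _).neg.exp)
  · exact measurable_const

/-- the exponent formula, in the main branch -/
lemma h_eq_exp {α z : ℝ} (hz : -Real.sqrt α < z) :
    h α z = Real.exp ((α-1) * Real.log (1 + z / Real.sqrt α) - Real.sqrt α * z) := by
  have hs : 0 ≤ Real.sqrt α := Real.sqrt_nonneg α
  have hpos : 0 < 1 + z / Real.sqrt α := base_nonneg hz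
  rw [h, if_pos hz, Real.rpow_def_of_pos hpos, ← Real.exp_add, mul_comm (α-1), sub_eq_add_neg]
  ring_nf

/-- domination: for `α ≥ 4`, `h α` is dominated by the fixed integrable function `g₀`. -/
lemma h_le_g₀ {α : ℝ} (hα : 4 ≤ α) (z : ℝ) : h α z ≤ g₀ z := by
  have hlog2 : Real.log 2 < 1 := by have := Real.log_two_lt_d9; linarith
  have hlog2' : 0 < Real.log 2 := Real.log_pos (by norm_num)
  have hg1 : (0:ℝ) ≤ Real.exp 1 * Real.exp (-(z^2/4)) := by positivity
  have hg2 : (0:ℝ) ≤ Real.exp (-(z^2/8)) := by positivity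
  have hg3 : (0:ℝ) ≤ (Ioi (0:ℝ)).indicator (fun z => Real.exp (-((1-Real.log 2) * z))) z :=
    Set.indicator_nonneg (fun _ _ => Real.exp_nonneg _) _
  have hs2 : (2:ℝ) ≤ Real.sqrt α := by
    rw [show (2:ℝ) = Real.sqrt 4 by rw [show (4:ℝ) = 2^2 by norm_num, Real.sqrt_sq]; norm_num]
    exact Real.sqrt_le_sqrt hα
  have hs : 0 < Real.sqrt α := by linarith
  have hαpos : (0:ℝ) < α := by linarith
  have hssq : Real.sqrt α * Real.sqrt α = α := Real.mul_self_sqrt hαpos.le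
  by_cases hz : -Real.sqrt α < z
  · rw [h_eq_exp hz]
    set u := z / Real.sqrt α with hu
    have hzu : z = Real.sqrt α * u := by rw [hu, mul_div_assoc', mul_div_cancel_left₀ _ hs.ne']
    have hαu : Real.sqrt α * z = α * u := by rw [hzu, ← mul_assoc, hssq]
    have hum : -1 < u := by
      rw [hu, neg_lt, ← neg_div]
      rw [div_lt_one hs]
      linarith [neg_lt.2 hz]
    rcases le_or_gt z 0 with hz0 | hz0
    · -- case -√α < z ≤ 0
      have hu0 : u ≤ 0 := div_nonpos_iff.2 (Or.inr ⟨hz0, hs.le⟩)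
      have hlog := log_ineq_neg hum hu0
      have hE : (α-1) * Real.log (1 + u) - Real.sqrt α * z ≤ 1 - z^2/4 := by
        have h1 : (α-1) * Real.log (1+u) ≤ (α-1) * (u - u^2/2) :=
          mul_le_mul_of_nonneg_left hlog (by linarith)
        have h2 : -u ≤ 1 := by
          rw [hu, neg_div', div_le_one hs]; linarith [neg_lt.2 hz]
        have h3 : α * u^2 = z^2 := by rw [hu, div_pow, Real.sq_sqrt hαpos.le]; field_simp
        nlinarith [sq_nonneg u]
      calc Real.exp _ ≤ Real.exp (1 - z^2/4) := Real.exp_le_exp.2 hE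
        _ = Real.exp 1 * Real.exp (-(z^2/4)) := by rw [← Real.exp_add]; ring_nf
        _ ≤ g₀ z := by unfold g₀; linarith
    · rcases le_or_gt z (Real.sqrt α) with hzs | hzs
      · -- case 0 < z ≤ √α
        have hu0 : 0 ≤ u := div_nonneg hz0.le hs.le
        have hu1 : u ≤ 1 := by rw [hu, div_le_one hs]; exact hzs
        have hlog := log_ineq_pos hu0 hu1
        have hE : (α-1) * Real.log (1 + u) - Real.sqrt α * z ≤ -(z^2/8) := by
          have h1 : (α-1) * Real.log (1+u) ≤ (α-1) * (u - u^2/4) :=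
            mul_le_mul_of_nonneg_left hlog (by linarith)
          have h3 : α * u^2 = z^2 := by rw [hu, div_pow, Real.sq_sqrt hαpos.le]; field_simp
          nlinarith [sq_nonneg u, hu0]
        calc Real.exp _ ≤ Real.exp (-(z^2/8)) := Real.exp_le_exp.2 hE
          _ ≤ g₀ z := by unfold g₀; linarith
      · -- case z > √α
        have hu1 : 1 ≤ u := by rw [hu, le_div_iff₀ hs]; linarith
        have hlog := log_ineq_big hu1
        have hE : (α-1) * Real.log (1 + u) - Real.sqrt α * z ≤ -((1-Real.log 2) * z) := by
          have hl0 : 0 ≤ Real.log (1+u) := Real.log_nonneg (by linarith)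
          have h1 : (α-1) * Real.log (1+u) ≤ α * (u * Real.log 2) := by
            calc (α-1) * Real.log (1+u) ≤ α * Real.log (1+u) := by nlinarith
              _ ≤ α * (u * Real.log 2) := mul_le_mul_of_nonneg_left hlog hαpos.le
          have h2 : Real.sqrt α * z = α * u := hαu
          have h4 : z ≤ α * u := by
            rw [← h2]; nlinarith
          nlinarith [mul_pos hαpos (lt_of_lt_of_le one_pos hu1 : (0:ℝ) < u)]
        calc Real.exp _ ≤ Real.exp (-((1-Real.log 2) * z)) := Real.exp_le_exp.2 hE
          _ ≤ g₀ z := by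
            unfold g₀
            rw [Set.indicator_of_mem (mem_Ioi.2 hz0)]
            linarith
  · rw [h, if_neg hz]
    unfold g₀; linarith

lemma tendsto_sqrt_atTop : Tendsto Real.sqrt atTop atTop := by
  rw [show Real.sqrt = fun x : ℝ => x ^ (1/2 : ℝ) from funext fun x => Real.sqrt_eq_rpow x]
  exact tendsto_rpow_atTop (by norm_num)

lemma tendsto_E (z : ℝ) :
    Tendsto (fun α : ℝ => (α-1) * Real.log (1 + z / Real.sqrt α) - Real.sqrt α * z)
      atTop (nhds (-(z^2/2))) := by
  have hb : Tendsto (fun α : ℝ => 2*|z|^3 / Real.sqrt α + |z| / Real.sqrt α + z^2/(2*α))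
      atTop (nhds 0) := by
    have h1 : Tendsto (fun α : ℝ => 2*|z|^3 / Real.sqrt α) atTop (nhds 0) :=
      tendsto_const_nhds.div_atTop tendsto_sqrt_atTop
    have h2 : Tendsto (fun α : ℝ => |z| / Real.sqrt α) atTop (nhds 0) :=
      tendsto_const_nhds.div_atTop tendsto_sqrt_atTop
    have h3 : Tendsto (fun α : ℝ => z^2/(2*α)) atTop (nhds 0) :=
      tendsto_const_nhds.div_atTop (tendsto_id.const_mul_atTop two_pos)
    simpa using (h1.add h2).add h3
  have key : ∀ᶠ α in atTop, ‖((α-1) * Real.log (1 + z / Real.sqrt α) - Real.sqrt α * z)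
      - (-(z^2/2))‖ ≤ 2*|z|^3 / Real.sqrt α + |z| / Real.sqrt α + z^2/(2*α) := by
    filter_upwards [eventually_ge_atTop (1:ℝ), eventually_ge_atTop (4*z^2+1)] with α h1 h4
    have hα0 : (0:ℝ) ≤ α := by linarith
    set s := Real.sqrt α with hs_def
    have hs1 : (1:ℝ) ≤ s := by
      rw [show (1:ℝ) = Real.sqrt 1 by simp, hs_def]
      exact Real.sqrt_le_sqrt h1
    have hs : 0 < s := by linarith
    have hss : s * s = α := Real.mul_self_sqrt hα0
    set u := z / s with hu_def
    have hu2 : |u| ≤ 1/2 := by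
      rw [hu_def, abs_div, abs_of_pos hs, div_le_iff₀ hs]
      have : Real.sqrt (4*z^2) ≤ s := Real.sqrt_le_sqrt (by linarith)
      have h4z : Real.sqrt (4*z^2) = 2*|z| := by
        rw [show 4*z^2 = (2*|z|)^2 by rw [mul_pow, sq_abs]; norm_num]
        exact Real.sqrt_sq (by positivity)
      rw [h4z] at this
      linarith
    have htay : |Real.log (1+u) - u + u^2/2| ≤ 2*|u|^3 := by
      have h := abs_log_sub_add_sum_range_le (x := -u) (by rw [abs_neg]; linarith [hu2]) 2
      have harg : (∑ i ∈ Finset.range 2, (-u)^(i+1)/(i+1)) + Real.log (1 - -u)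
          = Real.log (1+u) - u + u^2/2 := by
        rw [Finset.sum_range_succ, Finset.sum_range_succ, Finset.sum_range_zero,
          sub_neg_eq_add]
        push_cast
        ring
      rw [harg, abs_neg] at h
      refine h.trans ?_
      have h12 : (1:ℝ)/2 ≤ 1 - |u| := by linarith
      calc |u|^(2+1) / (1 - |u|) ≤ |u|^3 / (1/2) := by gcongr
          _ = 2*|u|^3 := by ring
    have h5 : α * u = s * z := by
      rw [hu_def, ← hss]
      field_simp
    have h6 : α * u^2 = z^2 := by
      rw [hu_def, div_pow, Real.sq_sqrt hα0]
      field_simp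
    have hid : (α-1) * Real.log (1 + u) - s * z - (-(z^2/2))
        = (α-1) * (Real.log (1+u) - u + u^2/2) + (-u + u^2/2) := by
      linear_combination h5 - h6/2
    rw [Real.norm_eq_abs, hid]
    have hb1 : |(α-1) * (Real.log (1+u) - u + u^2/2)| ≤ α * (2*|u|^3) := by
      rw [abs_mul, abs_of_nonneg (by linarith : (0:ℝ) ≤ α - 1)]
      apply mul_le_mul (by linarith) htay (abs_nonneg _) hα0
    have hb2 : |(-u + u^2/2)| ≤ |u| + u^2/2 := by
      refine (abs_add_le _ _).trans ?_
      rw [abs_neg, abs_of_nonneg (by positivity : (0:ℝ) ≤ u^2/2)]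
    have hu_abs : |u| = |z| / s := by rw [hu_def, abs_div, abs_of_pos hs]
    have hu3 : α * (2*|u|^3) = 2*|z|^3 / s := by
      rw [hu_abs, div_pow, ← hss]
      field_simp
    have hu_sq : u^2 = z^2/α := by rw [hu_def, div_pow, Real.sq_sqrt hα0]
    calc |(α-1) * (Real.log (1+u) - u + u^2/2) + (-u + u^2/2)|
        ≤ α * (2*|u|^3) + (|u| + u^2/2) := by
          refine (abs_add_le _ _).trans ?_
          exact add_le_add hb1 hb2
      _ = 2*|z|^3 / s + |z| / s + z^2/(2*α) := by
          rw [hu3, hu_abs, hu_sq]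
          ring
  have := squeeze_zero_norm' key hb
  have h2 := this.add_const (-(z^2/2))
  rw [zero_add] at h2
  refine h2.congr (fun α => by ring)

lemma tendsto_h_pointwise (z : ℝ) :
    Tendsto (fun α : ℝ => h α z) atTop (nhds (Real.exp (-(z^2/2)))) := by
  have h1 : Tendsto (fun α : ℝ => Real.exp ((α-1) * Real.log (1 + z / Real.sqrt α)
      - Real.sqrt α * z)) atTop (nhds (Real.exp (-(z^2/2)))) :=
    (Real.continuous_exp.tendsto _).comp (tendsto_E z)
  refine h1.congr' ?_
  filter_upwards [eventually_ge_atTop (z^2+1)] with α hα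
  have habs : |z| < Real.sqrt α := by
    have h0 : |z| = Real.sqrt (z^2) := (Real.sqrt_sq_eq_abs z).symm
    rw [h0]
    exact Real.sqrt_lt_sqrt (sq_nonneg z) (by linarith)
  have hz : -Real.sqrt α < z := by
    have := neg_abs_le z
    linarith [abs_nonneg z]
  exact (h_eq_exp hz).symm
lemma integrable_g₀ : Integrable g₀ := by
  unfold g₀
  refine Integrable.add (Integrable.add ?_ ?_) ?_
  · have h := (integrable_exp_neg_mul_sq (show (0:ℝ) < 1/4 by norm_num)).const_mul (Real.exp 1)
    refine h.congr (ae_of_all _ fun x => ?_)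
    simp only []
    rw [show -(1/4)*x^2 = -(x^2/4) from by ring]
  · have h := integrable_exp_neg_mul_sq (show (0:ℝ) < 1/8 by norm_num)
    refine h.congr (ae_of_all _ fun x => ?_)
    simp only []
    rw [show -(1/8)*x^2 = -(x^2/8) from by ring]
  · have hc : (0:ℝ) < 1 - Real.log 2 := by
      have := Real.log_two_lt_d9; linarith
    have h := exp_neg_integrableOn_Ioi 0 hc
    have h' : IntegrableOn (fun z : ℝ => Real.exp (-((1-Real.log 2) * z))) (Ioi 0) := by
      refine h.congr_fun (fun x _ => ?_) measurableSet_Ioi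
      simp only [neg_mul]
    exact h'.integrable_indicator measurableSet_Ioi

lemma integrable_h {α : ℝ} (hα : 4 ≤ α) : Integrable (h α) := by
  apply Integrable.mono' integrable_g₀ (measurable_h α).aestronglyMeasurable
  refine ae_of_all _ fun z => ?_
  rw [Real.norm_eq_abs, abs_of_nonneg (h_nonneg α z)]
  exact h_le_g₀ hα z

lemma tendsto_Ih : Tendsto (fun α => ∫ z, h α z) atTop (nhds (Real.sqrt (2*π))) := by
  have hlim : Tendsto (fun α => ∫ z, h α z) atTop (nhds (∫ z : ℝ, Real.exp (-(z^2/2)))) := by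
    refine tendsto_integral_filter_of_dominated_convergence g₀
      (Eventually.of_forall fun α => (measurable_h α).aestronglyMeasurable)
      ?_ integrable_g₀ (ae_of_all _ fun z => tendsto_h_pointwise z)
    filter_upwards [eventually_ge_atTop (4:ℝ)] with α hα
    refine ae_of_all _ fun z => ?_
    rw [Real.norm_eq_abs, abs_of_nonneg (h_nonneg α z)]
    exact h_le_g₀ hα z
  have hval : (∫ z : ℝ, Real.exp (-(z^2/2))) = Real.sqrt (2*π) := by
    have h := integral_gaussian (1/2 : ℝ)
    have h2 : (∫ x : ℝ, Real.exp (-(1/2:ℝ) * x^2)) = ∫ z : ℝ, Real.exp (-(z^2/2)) := by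
      congr 1
      funext x
      rw [show -(1/2:ℝ)*x^2 = -(x^2/2) by ring]
    rw [h2] at h
    rw [h]
    congr 1
    field_simp
  rwa [hval] at hlim
/-- affine measurable equivalence `x ↦ a + b * x` -/
noncomputable def affE (a b : ℝ) (hb : b ≠ 0) : ℝ ≃ᵐ ℝ where
  toEquiv :=
  { toFun := fun x => a + b * x
    invFun := fun x => (x - a) / b
    left_inv := fun x => by field_simp; ring
    right_inv := fun x => by field_simp; ring }
  measurable_toFun := (measurable_id.const_mul b).const_add a
  measurable_invFun := (measurable_id.sub_const a).div_const b

lemma map_wd (e : ℝ ≃ᵐ ℝ) (μ : Measure ℝ) {p : ℝ → ℝ≥0∞} (hp : Measurable p) :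
    Measure.map e.symm (μ.withDensity p) = (Measure.map e.symm μ).withDensity (p ∘ e) := by
  ext s hs
  rw [Measure.map_apply e.symm.measurable hs,
    withDensity_apply _ (e.symm.measurable hs),
    withDensity_apply _ hs,
    setLIntegral_map hs (hp.comp e.measurable) e.symm.measurable]
  refine setLIntegral_congr_fun (e.symm.measurable hs) (fun x _ => ?_)
  simp

lemma smul_wd (c : ℝ≥0∞) {p : ℝ → ℝ≥0∞} (hp : Measurable p) :
    (c • (volume : Measure ℝ)).withDensity p = volume.withDensity (fun z => c * p z) := by
  ext s hs
  rw [withDensity_apply _ hs, withDensity_apply _ hs, Measure.restrict_smul,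
    lintegral_smul_measure, smul_eq_mul, ← lintegral_const_mul c hp]

lemma map_esymm_volume (a b : ℝ) (hb : 0 < b) :
    Measure.map (affE a b hb.ne').symm volume = ENNReal.ofReal b • volume := by
  have h1 : ⇑(affE a b hb.ne').symm = (fun y : ℝ => b⁻¹ * y) ∘ (fun x : ℝ => -a + x) := by
    funext x
    show (x - a) / b = b⁻¹ * (-a + x)
    rw [div_eq_inv_mul]
    ring
  rw [h1, ← Measure.map_map (by fun_prop : Measurable fun y : ℝ => b⁻¹ * y) (by fun_prop : Measurable fun x : ℝ => -a + x),
    map_add_left_eq_self, Real.map_volume_mul_left (inv_ne_zero hb.ne'), inv_inv,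
    abs_of_pos hb]

/-- the density of the standardized gamma -/
noncomputable def fG (α z : ℝ) : ℝ := Real.sqrt α * gammaPDFReal α 1 (α + Real.sqrt α * z)

lemma measurable_fG (α : ℝ) : Measurable (fG α) :=
  ((measurable_gammaPDFReal α 1).comp
    ((measurable_id.const_mul (Real.sqrt α)).const_add α)).const_mul _

lemma fG_nonneg {α : ℝ} (hα : 0 < α) (z : ℝ) : 0 ≤ fG α z :=
  mul_nonneg (Real.sqrt_nonneg _) (gammaPDFReal_nonneg hα one_pos _)

lemma map_gamma (α : ℝ) (hα : 4 ≤ α) :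
    Measure.map (fun x => (x - α) / Real.sqrt α) (gammaMeasure α 1)
      = volume.withDensity (fun z => ENNReal.ofReal (fG α z)) := by
  have hb : 0 < Real.sqrt α := Real.sqrt_pos.2 (by linarith)
  have hfun : (fun x : ℝ => (x - α) / Real.sqrt α) = ⇑(affE α (Real.sqrt α) hb.ne').symm := rfl
  have hgm : gammaMeasure α 1 = volume.withDensity (gammaPDF α 1) := rfl
  rw [hfun, hgm, map_wd _ _ (show Measurable (gammaPDF α 1) from (measurable_gammaPDFReal α 1).ennreal_ofReal),
    map_esymm_volume α (Real.sqrt α) hb,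
    smul_wd _ ((show Measurable (gammaPDF α 1) from
      (measurable_gammaPDFReal α 1).ennreal_ofReal).comp
      (affE α (Real.sqrt α) hb.ne').measurable)]
  congr 1
  funext z
  show ENNReal.ofReal (Real.sqrt α) * gammaPDF α 1 (α + Real.sqrt α * z) = _
  rw [gammaPDF, ← ENNReal.ofReal_mul (Real.sqrt_nonneg _)]
  rfl

lemma fG_eq {α : ℝ} (hα : 4 ≤ α) (z : ℝ) : fG α z = Cc α * h α z := by
  have hαpos : (0:ℝ) < α := by linarith
  have hb : 0 < Real.sqrt α := Real.sqrt_pos.2 hαpos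
  have hssq : Real.sqrt α * Real.sqrt α = α := Real.mul_self_sqrt hαpos.le
  have hΓ : Real.Gamma α ≠ 0 := (Real.Gamma_pos_of_pos hαpos).ne'
  unfold fG gammaPDFReal h Cc
  by_cases hz : -Real.sqrt α < z
  · rw [if_pos hz]
    have hx : (0:ℝ) ≤ α + Real.sqrt α * z := by nlinarith
    rw [if_pos hx]
    have hbase : 0 < 1 + z / Real.sqrt α := base_nonneg hz
    have hfact : α + Real.sqrt α * z = α * (1 + z / Real.sqrt α) := by
      field_simp
      nlinarith
    rw [hfact, Real.mul_rpow hαpos.le hbase.le, Real.one_rpow,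
      show -(1 * (α * (1 + z / Real.sqrt α))) = -α + -(Real.sqrt α * z) by
        field_simp; nlinarith,
      Real.exp_add]
    field_simp
  · rw [if_neg hz]
    have hz' : z ≤ -Real.sqrt α := not_lt.1 hz
    rcases lt_or_eq_of_le hz' with hlt | heq
    · have hx : α + Real.sqrt α * z < 0 := by nlinarith
      rw [if_neg (not_le.2 hx)]
      simp
    · have hx : α + Real.sqrt α * z = 0 := by rw [heq]; nlinarith
      rw [hx, if_pos le_rfl, Real.zero_rpow (by intro hc; rw [sub_eq_zero] at hc; linarith)]
      simp
lemma integrable_fG {α : ℝ} (hα : 4 ≤ α) : Integrable (fG α) := by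
  refine ((integrable_h hα).const_mul (Cc α)).congr (ae_of_all _ fun z => ?_)
  exact (fG_eq hα z).symm

lemma Cc_mul_Ih {α : ℝ} (hα : 4 ≤ α) : Cc α * ∫ z, h α z = 1 := by
  have hαpos : (0:ℝ) < α := by linarith
  haveI hprob : IsProbabilityMeasure (gammaMeasure α 1) :=
    isProbabilityMeasure_gammaMeasure hαpos one_pos
  haveI hmap : IsProbabilityMeasure
      (Measure.map (fun x => (x - α) / Real.sqrt α) (gammaMeasure α 1)) :=
    Measure.isProbabilityMeasure_map ((measurable_id.sub_const α).div_const _).aemeasurable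
  have h1 : (volume.withDensity fun z => ENNReal.ofReal (fG α z)) Set.univ = 1 := by
    rw [← map_gamma α hα]
    exact hmap.measure_univ
  rw [withDensity_apply _ MeasurableSet.univ, Measure.restrict_univ] at h1
  rw [← ofReal_integral_eq_lintegral_ofReal (integrable_fG hα)
    (ae_of_all _ fun z => fG_nonneg hαpos z), ENNReal.ofReal_eq_one] at h1
  calc Cc α * ∫ z, h α z = ∫ z, Cc α * h α z := (integral_const_mul _ _).symm
    _ = ∫ z, fG α z := by
        refine integral_congr_ae (ae_of_all _ fun z => ?_)
        exact (fG_eq hα z).symm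
    _ = 1 := h1

lemma sqrt_two_pi_pos : 0 < Real.sqrt (2*π) := Real.sqrt_pos.2 (by positivity)

lemma tendsto_Cc : Tendsto Cc atTop (nhds ((Real.sqrt (2*π))⁻¹)) := by
  have hIh := tendsto_Ih
  have hgt := hIh.eventually_const_lt
    (show Real.sqrt (2*π)/2 < Real.sqrt (2*π) by linarith [sqrt_two_pi_pos])
  have hinv : Tendsto (fun α => (∫ z, h α z)⁻¹) atTop (nhds ((Real.sqrt (2*π))⁻¹)) :=
    hIh.inv₀ sqrt_two_pi_pos.ne'
  refine hinv.congr' ?_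
  filter_upwards [eventually_ge_atTop (4:ℝ), hgt] with α h4 hgt
  have hIh0 : (∫ z, h α z) ≠ 0 := by
    have : 0 < ∫ z, h α z := lt_trans (by linarith [sqrt_two_pi_pos]) hgt
    exact this.ne'
  have hmul := Cc_mul_Ih h4
  exact (eq_inv_of_mul_eq_one_left hmul).symm

lemma gauss_limit_eq (z : ℝ) :
    (Real.sqrt (2*π))⁻¹ * Real.exp (-(z^2/2)) = gaussianPDFReal 0 1 z := by
  unfold gaussianPDFReal
  push_cast
  rw [mul_one, sub_zero]
  congr 1
  rw [mul_one]
  ring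

lemma tendsto_fG_pointwise (z : ℝ) :
    Tendsto (fun α => fG α z) atTop (nhds (gaussianPDFReal 0 1 z)) := by
  have h1 := tendsto_Cc.mul (tendsto_h_pointwise z)
  rw [gauss_limit_eq z] at h1
  refine h1.congr' ?_
  filter_upwards [eventually_ge_atTop (4:ℝ)] with α h4
  exact (fG_eq h4 z).symm

lemma tendsto_L1 :
    Tendsto (fun α => ∫ z, |fG α z - gaussianPDFReal 0 1 z|) atTop (nhds 0) := by
  have hCc1 : ∀ᶠ α in atTop, Cc α ≤ 1 := by
    have hlt : (Real.sqrt (2*π))⁻¹ < 1 := by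
      rw [inv_lt_one_iff₀]
      right
      rw [show (1:ℝ) = Real.sqrt 1 by simp]
      exact Real.sqrt_lt_sqrt (by norm_num) (by nlinarith [Real.pi_gt_three])
    exact (tendsto_Cc.eventually_lt_const hlt).mono fun _ h => h.le
  have key : Tendsto (fun α => ∫ z, |fG α z - gaussianPDFReal 0 1 z|) atTop
      (nhds (∫ _ : ℝ, (0:ℝ))) := by
    refine tendsto_integral_filter_of_dominated_convergence
      (fun z => g₀ z + gaussianPDFReal 0 1 z) ?_ ?_
      (integrable_g₀.add (integrable_gaussianPDFReal 0 1)) ?_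
    · exact Eventually.of_forall fun α =>
        ((measurable_fG α).sub (measurable_gaussianPDFReal 0 1)).abs.aestronglyMeasurable
    · filter_upwards [eventually_ge_atTop (4:ℝ), hCc1] with α h4 hC
      refine ae_of_all _ fun z => ?_
      rw [Real.norm_eq_abs, abs_abs]
      have hφ : 0 ≤ gaussianPDFReal 0 1 z := gaussianPDFReal_nonneg 0 1 z
      have hfg : 0 ≤ fG α z := fG_nonneg (by linarith) z
      have hfg2 : fG α z ≤ g₀ z := by
        rw [fG_eq h4 z]
        calc Cc α * h α z ≤ 1 * h α z :=
              mul_le_mul_of_nonneg_right hC (h_nonneg α z)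
          _ = h α z := one_mul _
          _ ≤ g₀ z := h_le_g₀ h4 z
      calc |fG α z - gaussianPDFReal 0 1 z| ≤ |fG α z| + |gaussianPDFReal 0 1 z| :=
            abs_sub _ _
        _ = fG α z + gaussianPDFReal 0 1 z := by rw [abs_of_nonneg hfg, abs_of_nonneg hφ]
        _ ≤ g₀ z + gaussianPDFReal 0 1 z := by linarith
    · refine ae_of_all _ fun z => ?_
      have := ((tendsto_fG_pointwise z).sub_const (gaussianPDFReal 0 1 z)).abs
      simpa using this
  simpa using key

lemma tvDist_nonneg {Ω : Type*} [MeasurableSpace Ω] (μ ν : Measure Ω) : 0 ≤ tvDist μ ν :=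
  Real.iSup_nonneg fun _ => abs_nonneg _

lemma tv_le_L1 {f g : ℝ → ℝ} (hfm : Measurable f) (hgm : Measurable g)
    (hf0 : ∀ x, 0 ≤ f x) (hg0 : ∀ x, 0 ≤ g x) (hfi : Integrable f) (hgi : Integrable g) :
    tvDist (volume.withDensity fun x => ENNReal.ofReal (f x))
        (volume.withDensity fun x => ENNReal.ofReal (g x)) ≤ ∫ x, |f x - g x| := by
  have key : ∀ (s : Set ℝ), MeasurableSet s →
      |((volume.withDensity fun x => ENNReal.ofReal (f x)) s).toReal
        - ((volume.withDensity fun x => ENNReal.ofReal (g x)) s).toReal|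
        ≤ ∫ x, |f x - g x| := by
    intro s hs
    have repf : ∀ (f : ℝ → ℝ), Measurable f → (∀ x, 0 ≤ f x) → Integrable f →
        ((volume.withDensity fun x => ENNReal.ofReal (f x)) s).toReal = ∫ x in s, f x := by
      intro f hm h0 hi
      rw [withDensity_apply _ hs, ← ofReal_integral_eq_lintegral_ofReal hi.integrableOn
        (ae_of_all _ fun x => h0 x), ENNReal.toReal_ofReal (integral_nonneg fun x => h0 x)]
    rw [repf f hfm hf0 hfi, repf g hgm hg0 hgi]
    calc |(∫ x in s, f x) - ∫ x in s, g x| = |∫ x in s, (f x - g x)| := by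
          rw [integral_sub hfi.integrableOn hgi.integrableOn]
      _ ≤ ∫ x in s, |f x - g x| := by
          simpa [Real.norm_eq_abs] using
            norm_integral_le_integral_norm (μ := volume.restrict s) (fun x => f x - g x)
      _ ≤ ∫ x, |f x - g x| :=
          setIntegral_le_integral (hfi.sub hgi).abs (ae_of_all _ fun x => abs_nonneg _)
  unfold tvDist
  haveI : Nonempty {s : Set ℝ // MeasurableSet s} := ⟨⟨∅, MeasurableSet.empty⟩⟩
  exact ciSup_le fun s => key s.1 s.2

end GammaTV

/-- Local central limit theorem: the standardized Gamma `Z_α = (Γ(α,1) - α)/√α` converges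
in total variation to the standard Gaussian as `α → ∞`. -/
theorem standardized_gamma_tendsto_gaussian_tv :
    Tendsto (fun α : ℝ =>
        tvDist (Measure.map (fun x => (x - α) / Real.sqrt α) (gammaMeasure α 1))
          (gaussianReal 0 1))
      atTop (nhds 0) := by
  refine squeeze_zero' (Eventually.of_forall fun α => GammaTV.tvDist_nonneg _ _)
    ?_ GammaTV.tendsto_L1
  filter_upwards [eventually_ge_atTop (4:ℝ)] with α h4
  rw [GammaTV.map_gamma α h4, gaussianReal_of_var_ne_zero 0 one_ne_zero]
  have hg : gaussianPDF 0 1 = fun x => ENNReal.ofReal (gaussianPDFReal 0 1 x) := rfl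
  rw [hg]
  exact GammaTV.tv_le_L1 (GammaTV.measurable_fG α) (measurable_gaussianPDFReal 0 1)
    (GammaTV.fG_nonneg (by linarith)) (gaussianPDFReal_nonneg 0 1)
    (GammaTV.integrable_fG h4) (integrable_gaussianPDFReal 0 1)
end

section
/- Let G: ℝ → (0, D) be strictly decreasing, continuous, with G(r) → D as r → -∞ and G(r) → 0 as r → ∞, where D ∈ (0,∞]. Suppose t: (0,∞) → ℝ and ω: (0,∞) → (0,∞) satisfy t_ε → ∞ and ω_ε/t_ε → 0 as ε → 0⁺. Let d_ε: [0,∞) → [0, D_ε] be monotone decreasing in time for each ε, with D_ε → D. If d_ε(t_ε + r·ω_ε) → G(r) for every r ∈ ℝ as ε → 0⁺, then for every η ∈ (0,D), the mixing time τ_ε(η) := inf{t ≥ 0 : d_ε(t) ≤ η} satisfies (τ_ε(η) - t_ε - G⁻¹(η)·ω_ε)/ω_ε → 0 as ε → 0⁺. -/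
open Filter ENNReal

/-- Profile cut-off implies mixing time asymptotics: if the distance to equilibrium
`d ε` converges along the time scale `t ε + r · ω ε` to a strictly decreasing continuous
profile `G` with `G(-∞) = D` and `G(∞) = 0`, then for every `η ∈ (0, D)` the mixing time
`τ_ε(η) = inf{s ≥ 0 : d ε s ≤ η}` satisfies
`(τ_ε(η) - t_ε - G⁻¹(η)·ω_ε)/ω_ε → 0` as `ε → 0⁺`. -/
theorem profile_cutoff_implies_mixing (D : ℝ≥0∞) (hD : 0 < D)
    (G : ℝ → ℝ≥0∞) (hG_anti : StrictAnti G) (hG_cont : Continuous G)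
    (hG_range : ∀ r, 0 < G r ∧ G r < D)
    (hG_bot : Tendsto G atBot (nhds D)) (hG_top : Tendsto G atTop (nhds 0))
    (t ω : ℝ → ℝ) (hω_pos : ∀ ε, 0 < ω ε)
    (ht : Tendsto t (nhdsWithin 0 (Set.Ioi 0)) atTop)
    (hωt : Tendsto (fun ε => ω ε / t ε) (nhdsWithin 0 (Set.Ioi 0)) (nhds 0))
    (dist : ℝ → ℝ → ℝ≥0∞) (Diam : ℝ → ℝ≥0∞)
    (hdist_mono : ∀ ε, Antitone (dist ε))
    (hdist_le : ∀ ε s, dist ε s ≤ Diam ε)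
    (hDiam : Tendsto Diam (nhdsWithin 0 (Set.Ioi 0)) (nhds D))
    (h_profile : ∀ r : ℝ,
      Tendsto (fun ε => dist ε (t ε + r * ω ε)) (nhdsWithin 0 (Set.Ioi 0)) (nhds (G r))) :
    ∀ η : ℝ≥0∞, 0 < η → η < D → ∀ r₀ : ℝ, G r₀ = η →
      Tendsto (fun ε =>
          (sInf {s : ℝ | 0 ≤ s ∧ dist ε s ≤ η} - t ε - r₀ * ω ε) / ω ε)
        (nhdsWithin 0 (Set.Ioi 0)) (nhds 0) := by
  intro η hη hηD r₀ hr₀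
  rw [NormedAddCommGroup.tendsto_nhds_zero]
  intro δ hδ
  set l := nhdsWithin (0:ℝ) (Set.Ioi 0) with hl
  set rp := r₀ + δ/2 with hrp
  set rm := r₀ - δ/2 with hrm
  have hGp : G rp < η := hr₀ ▸ hG_anti (by simp [hrp]; linarith)
  have hGm : η < G rm := hr₀ ▸ hG_anti (by simp [hrm]; linarith)
  have E1 : ∀ᶠ ε in l, dist ε (t ε + rp * ω ε) < η :=
    (h_profile rp).eventually_lt_const hGp
  have E2 : ∀ᶠ ε in l, η < dist ε (t ε + rm * ω ε) :=
    (h_profile rm).eventually_const_lt hGm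
  have hrt : Tendsto (fun ε => rp * (ω ε / t ε)) l (nhds 0) := by
    simpa using hωt.const_mul rp
  have E3a : ∀ᶠ ε in l, ‖rp * (ω ε / t ε)‖ < 1/2 :=
    NormedAddCommGroup.tendsto_nhds_zero.mp hrt (1/2) (by norm_num)
  have E3b : ∀ᶠ ε in l, (1:ℝ) ≤ t ε := ht.eventually_ge_atTop 1
  filter_upwards [E1, E2, E3a, E3b] with ε h1 h2 h3 h4
  have hω := hω_pos ε
  have htpos : (0:ℝ) < t ε := by linarith
  have habs : |rp * ω ε| < t ε / 2 := by
    have h3' : |rp * ω ε| / t ε < 1/2 := by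
      rw [Real.norm_eq_abs] at h3
      rwa [mul_div_assoc', abs_div, abs_of_pos htpos] at h3
    calc |rp * ω ε| = |rp * ω ε| / t ε * t ε := by field_simp
    _ < 1/2 * t ε := by exact mul_lt_mul_of_pos_right h3' htpos
    _ = t ε / 2 := by ring
  have hnn : 0 ≤ t ε + rp * ω ε := by
    have := neg_abs_le (rp * ω ε); linarith
  set S := {s : ℝ | 0 ≤ s ∧ dist ε s ≤ η} with hS
  have haS : (t ε + rp * ω ε) ∈ S := ⟨hnn, le_of_lt h1⟩
  have hblb : ∀ s ∈ S, t ε + rm * ω ε ≤ s := by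
    intro s hs
    by_contra hlt
    push_neg at hlt
    have hmono : dist ε (t ε + rm * ω ε) ≤ dist ε s := hdist_mono ε hlt.le
    exact absurd (hmono.trans hs.2) (not_le.mpr h2)
  have hbdd : BddBelow S := ⟨_, fun s hs => hblb s hs⟩
  have hτ_le : sInf S ≤ t ε + rp * ω ε := csInf_le hbdd haS
  have hτ_ge : t ε + rm * ω ε ≤ sInf S := le_csInf ⟨_, haS⟩ hblb
  rw [Real.norm_eq_abs, abs_div, abs_of_pos hω, div_lt_iff₀ hω]
  rw [hrm] at hτ_ge
  rw [hrp] at hτ_le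
  have h5 : |sInf S - t ε - r₀ * ω ε| ≤ δ/2 * ω ε := by
    rw [abs_le]
    constructor <;> nlinarith [hτ_ge, hτ_le]
  nlinarith [h5]
end

section
/- Conversely, in the abstract cut-off framework: with G, t_ε, ω_ε, d_ε as above (G strictly decreasing continuous bijection onto (0,D), d_ε monotone decreasing in t, D_ε → D), if for every η ∈ (0,D) the mixing times satisfy τ_ε(η) = t_ε + G⁻¹(η)·ω_ε + o(ω_ε) as ε → 0⁺, then d_ε(t_ε + r·ω_ε) → G(r) for every r ∈ ℝ. -/
open Filter ENNReal

/-- Mixing time asymptotics imply profile cut-off: in the abstract cut-off framework,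
if for every `η ∈ (0, D)` the mixing time `τ_ε(η) = inf{s ≥ 0 : d ε s ≤ η}` satisfies
`τ_ε(η) = t_ε + G⁻¹(η)·ω_ε + o(ω_ε)` as `ε → 0⁺`, then
`d ε (t ε + r · ω ε) → G(r)` for every `r ∈ ℝ`. -/
theorem mixing_implies_profile_cutoff (D : ℝ≥0∞) (hD : 0 < D)
    (G : ℝ → ℝ≥0∞) (hG_anti : StrictAnti G) (hG_cont : Continuous G)
    (hG_range : ∀ r, 0 < G r ∧ G r < D)
    (hG_bot : Tendsto G atBot (nhds D)) (hG_top : Tendsto G atTop (nhds 0))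
    (t ω : ℝ → ℝ) (hω_pos : ∀ ε, 0 < ω ε)
    (ht : Tendsto t (nhdsWithin 0 (Set.Ioi 0)) atTop)
    (hωt : Tendsto (fun ε => ω ε / t ε) (nhdsWithin 0 (Set.Ioi 0)) (nhds 0))
    (dist : ℝ → ℝ → ℝ≥0∞) (Diam : ℝ → ℝ≥0∞)
    (hdist_mono : ∀ ε, Antitone (dist ε))
    (hdist_le : ∀ ε s, dist ε s ≤ Diam ε)
    (hDiam : Tendsto Diam (nhdsWithin 0 (Set.Ioi 0)) (nhds D))
    (h_mixing : ∀ η : ℝ≥0∞, 0 < η → η < D → ∀ r₀ : ℝ, G r₀ = η →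
      Tendsto (fun ε =>
          (sInf {s : ℝ | 0 ≤ s ∧ dist ε s ≤ η} - t ε - r₀ * ω ε) / ω ε)
        (nhdsWithin 0 (Set.Ioi 0)) (nhds 0)) :
    ∀ r : ℝ,
      Tendsto (fun ε => dist ε (t ε + r * ω ε)) (nhdsWithin 0 (Set.Ioi 0))
        (nhds (G r)) := by
  intro r
  set l := nhdsWithin (0:ℝ) (Set.Ioi 0) with hl
  -- auxiliary: t ε + c * ω ε → ∞ for any constant c
  have haux : ∀ c : ℝ, Tendsto (fun ε => t ε + c * ω ε) l atTop := by
    intro c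
    have h2 : Tendsto (fun ε => t ε / 2) l atTop := ht.atTop_div_const two_pos
    refine tendsto_atTop_mono' l ?_ h2
    have h1 : ∀ᶠ ε in l, ω ε / t ε < 1 / (2 * (|c| + 1)) :=
      hωt.eventually_lt_const (by positivity)
    filter_upwards [h1, ht.eventually_gt_atTop 0] with ε hε ht0
    have hωlt : ω ε * (2 * (|c| + 1)) < t ε := by
      rw [div_lt_div_iff₀ ht0 (by positivity)] at hε
      linarith
    nlinarith [mul_nonneg (show (0:ℝ) ≤ c + |c| by linarith [neg_abs_le c])
      (le_of_lt (hω_pos ε)), abs_nonneg c, hω_pos ε]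
  have hbdd : ∀ ε (η : ℝ≥0∞), BddBelow {s : ℝ | 0 ≤ s ∧ dist ε s ≤ η} :=
    fun ε η => ⟨0, fun s hs => hs.1⟩
  -- Lemma A: upper bound
  have hA : ∀ r' < r, ∀ᶠ ε in l, dist ε (t ε + r * ω ε) ≤ G r' := by
    intro r' hr'
    have hmix := h_mixing (G r') (hG_range r').1 (hG_range r').2 r' rfl
    have hδpos : (0:ℝ) < (r - r') / 2 := by linarith
    have h1 : ∀ᶠ ε in l,
        |(sInf {s : ℝ | 0 ≤ s ∧ dist ε s ≤ G r'} - t ε - r' * ω ε) / ω ε|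
          < (r - r') / 2 := by
      have := Metric.tendsto_nhds.mp hmix ((r - r') / 2) hδpos
      filter_upwards [this] with ε hε
      rwa [Real.dist_eq, sub_zero] at hε
    have h2 : ∀ᶠ ε in l, 0 < t ε + (r' - (r - r') / 2) * ω ε :=
      (haux (r' - (r - r') / 2)).eventually_gt_atTop 0
    filter_upwards [h1, h2] with ε h1 h2
    set A := sInf {s : ℝ | 0 ≤ s ∧ dist ε s ≤ G r'} with hA
    obtain ⟨hq1, hq2⟩ := abs_lt.mp h1
    have hω := hω_pos ε
    have hup : A - t ε - r' * ω ε < (r - r') / 2 * ω ε :=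
      (div_lt_iff₀ hω).mp hq2
    have hlo : -((r - r') / 2 * ω ε) < A - t ε - r' * ω ε := by
      have h' := (lt_div_iff₀ hω).mp hq1
      linarith
    have hApos : 0 < A := by nlinarith
    have hne : {s : ℝ | 0 ≤ s ∧ dist ε s ≤ G r'}.Nonempty := by
      by_contra h
      rw [Set.not_nonempty_iff_eq_empty] at h
      rw [hA, h, Real.sInf_empty] at hApos
      exact lt_irrefl 0 hApos
    have hAlt : A < t ε + r * ω ε := by nlinarith
    obtain ⟨s, ⟨hs0, hsd⟩, hslt⟩ := (csInf_lt_iff (hbdd ε (G r')) hne).mp hAlt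
    exact le_trans (hdist_mono ε (le_of_lt hslt)) hsd
  -- Lemma B: lower bound
  have hB : ∀ r'', r < r'' → ∀ᶠ ε in l, G r'' ≤ dist ε (t ε + r * ω ε) := by
    intro r'' hr''
    have hmix := h_mixing (G r'') (hG_range r'').1 (hG_range r'').2 r'' rfl
    have hδpos : (0:ℝ) < (r'' - r) / 2 := by linarith
    have h1 : ∀ᶠ ε in l,
        |(sInf {s : ℝ | 0 ≤ s ∧ dist ε s ≤ G r''} - t ε - r'' * ω ε) / ω ε|
          < (r'' - r) / 2 := by
      have := Metric.tendsto_nhds.mp hmix ((r'' - r) / 2) hδpos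
      filter_upwards [this] with ε hε
      rwa [Real.dist_eq, sub_zero] at hε
    have h2 : ∀ᶠ ε in l, 0 ≤ t ε + r * ω ε :=
      (haux r).eventually_ge_atTop 0
    filter_upwards [h1, h2] with ε h1 h2
    set A := sInf {s : ℝ | 0 ≤ s ∧ dist ε s ≤ G r''} with hA
    obtain ⟨hq1, hq2⟩ := abs_lt.mp h1
    have hω := hω_pos ε
    have hlo : -((r'' - r) / 2 * ω ε) < A - t ε - r'' * ω ε := by
      have h' : -((r'' - r) / 2) < (A - t ε - r'' * ω ε) / ω ε := hq1
      have := (lt_div_iff₀ hω).mp h'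
      linarith
    have hAgt : t ε + r * ω ε < A := by nlinarith
    by_contra h
    push_neg at h
    have hmem : t ε + r * ω ε ∈ {s : ℝ | 0 ≤ s ∧ dist ε s ≤ G r''} :=
      ⟨h2, le_of_lt h⟩
    have := csInf_le (hbdd ε (G r'')) hmem
    rw [← hA] at this
    linarith
  -- conclude
  rw [tendsto_order]
  constructor
  · intro a ha
    have hopen : IsOpen (G ⁻¹' Set.Ioi a) := isOpen_Ioi.preimage hG_cont
    obtain ⟨δ, hδpos, hball⟩ := Metric.isOpen_iff.mp hopen r ha
    have hmem : r + δ / 2 ∈ Metric.ball r δ := by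
      rw [Metric.mem_ball, Real.dist_eq]
      rw [add_sub_cancel_left, abs_of_pos (by linarith)]
      linarith
    have hr'' : a < G (r + δ / 2) := hball hmem
    filter_upwards [hB (r + δ / 2) (by linarith)] with ε hε
    exact lt_of_lt_of_le hr'' hε
  · intro b hb
    have hopen : IsOpen (G ⁻¹' Set.Iio b) := isOpen_Iio.preimage hG_cont
    obtain ⟨δ, hδpos, hball⟩ := Metric.isOpen_iff.mp hopen r hb
    have hmem : r - δ / 2 ∈ Metric.ball r δ := by
      rw [Metric.mem_ball, Real.dist_eq]
      rw [sub_sub_cancel_left, abs_neg, abs_of_pos (by linarith)]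
      linarith
    have hr' : G (r - δ / 2) < b := hball hmem
    filter_upwards [hA (r - δ / 2) (by linarith)] with ε hε
    exact lt_of_le_of_lt hε hr'
end
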